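/- There exists a constant C > 0 such that for every integer l ≥ 1, every λ > 0, every s ∈ {0,1,…,⌈log₂(l+1)⌉} and every pair of points x, y ∈ Q_l, one has (1/l²) Σ_{k ∈ A_s} (e^D_k(x) − e^D_k(y))² / (ζ_k + λ)² ≤ C · 2^{−4s} / (λ + 2^{−2s})² · ‖x − y‖₂². (This quantity is the variance of the increment ḡ^λ_{x,A_s} − ḡ^λ_{y,A_s} of the annulus component of the massive Gaussian field when the α̂(k) are independent standard Gaussians.) -/

import Mathlib

open Finset
open scoped Classical

/-- The momentum `k = (π j₁/(l+1), π j₂/(l+1))` for `j ∈ {1,…,l}²`. -/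
noncomputable def kvec (l : ℕ) (j : ℕ × ℕ) : ℝ × ℝ :=
  (Real.pi * j.1 / (l + 1), Real.pi * j.2 / (l + 1))

/-- Dirichlet eigenfunction `e^D_k(x) = 2 sin(k₁x₁) sin(k₂x₂)`. -/
noncomputable def eD (l : ℕ) (j : ℕ × ℕ) (x : ℤ × ℤ) : ℝ :=
  2 * Real.sin ((kvec l j).1 * x.1) * Real.sin ((kvec l j).2 * x.2)

/-- Eigenvalue `ζ_k = 4(sin²(k₁/2) + sin²(k₂/2))`. -/
noncomputable def zeta (l : ℕ) (j : ℕ × ℕ) : ℝ :=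
  4 * (Real.sin ((kvec l j).1 / 2) ^ 2 + Real.sin ((kvec l j).2 / 2) ^ 2)

/-- The dyadic momentum annulus
`A_s = {k ∈ Λ*_l : π 2^{−(1+s)} ≤ ‖k‖₂ ≤ π 2^{−s}}`, indexed by `j ∈ {1,…,l}²`. -/
noncomputable def annulus (l s : ℕ) : Finset (ℕ × ℕ) :=
  (Finset.Icc 1 l ×ˢ Finset.Icc 1 l).filter fun j =>
    Real.pi * (2 : ℝ) ^ (-(1 + (s : ℤ))) ≤
        Real.sqrt ((kvec l j).1 ^ 2 + (kvec l j).2 ^ 2) ∧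
      Real.sqrt ((kvec l j).1 ^ 2 + (kvec l j).2 ^ 2) ≤ Real.pi * (2 : ℝ) ^ (-(s : ℤ))

/-!
Each `e^D_k` is Lipschitz: `(e^D_k(x) − e^D_k(y))² ≤ 8‖k‖²‖x − y‖²`, since `sin` is 1-Lipschitz
and bounded by 1. On `A_s` we have `‖k‖ ≤ π 2^{−s}`, and Jordan's inequality `sin t ≥ 2t/π` on
`[0, π/2]` gives `ζ_k ≥ 4‖k‖²/π² ≥ 2^{−2s}`, so every summand is at most
`8π² 2^{−2s} ‖x − y‖² / (λ + 2^{−2s})²`. Both coordinates of `j` are at most `(l+1) 2^{−s}`,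
so `A_s` has at most `(2l 2^{−s})²` points, and the theorem holds with `C = 32π²`.
-/

open Real

lemma sq_two_mul_sin_mul_sin_sub_le (p q p' q' : ℝ) :
    (2 * sin p * sin q - 2 * sin p' * sin q') ^ 2 ≤ 8 * ((p - p') ^ 2 + (q - q') ^ 2) := by
  have hsplit : 2 * sin p * sin q - 2 * sin p' * sin q' =
      2 * ((sin p - sin p') * sin q + sin p' * (sin q - sin q')) := by ring
  have habs : |2 * sin p * sin q - 2 * sin p' * sin q'| ≤ 2 * (|p - p'| + |q - q'|) := by
    rw [hsplit, abs_mul, abs_two]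
    gcongr
    calc |(sin p - sin p') * sin q + sin p' * (sin q - sin q')|
        ≤ |sin p - sin p'| * |sin q| + |sin p'| * |sin q - sin q'| := by
          rw [← abs_mul, ← abs_mul]; exact abs_add_le _ _
      _ ≤ |p - p'| * 1 + 1 * |q - q'| :=
          add_le_add
            (mul_le_mul (abs_sin_sub_sin_le _ _) (abs_sin_le_one _) (abs_nonneg _) (abs_nonneg _))
            (mul_le_mul (abs_sin_le_one _) (abs_sin_sub_sin_le _ _) (abs_nonneg _) zero_le_one)
      _ = |p - p'| + |q - q'| := by ring
  calc (2 * sin p * sin q - 2 * sin p' * sin q') ^ 2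
      ≤ (2 * (|p - p'| + |q - q'|)) ^ 2 := sq_le_sq' (abs_le.1 habs).1 (abs_le.1 habs).2
    _ ≤ 8 * ((p - p') ^ 2 + (q - q') ^ 2) := by
      rw [← sq_abs (p - p'), ← sq_abs (q - q')]
      nlinarith [sq_nonneg (|p - p'| - |q - q'|)]

lemma sq_div_pi_le_sin_half_sq {a : ℝ} (h0 : 0 ≤ a) (hπ : a ≤ π) :
    (a / π) ^ 2 ≤ sin (a / 2) ^ 2 := by
  have hjordan := mul_le_sin (x := a / 2) (by linarith) (by linarith)
  have : a / π = 2 / π * (a / 2) := by ring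
  rw [this]
  exact pow_le_pow_left₀ (by positivity) hjordan 2

/-- `‖k‖₂²` for the momentum `k = kvec l j`. -/
noncomputable def kNormSq (l : ℕ) (j : ℕ × ℕ) : ℝ := (kvec l j).1 ^ 2 + (kvec l j).2 ^ 2

lemma pi_mul_div_succ_nonneg (n l : ℕ) : 0 ≤ π * n / (l + 1) := by positivity

lemma pi_mul_div_succ_le_pi {n l : ℕ} (h : n ≤ l) : π * n / (l + 1) ≤ π := by
  rw [div_le_iff₀ (by positivity)]
  gcongr
  exact_mod_cast h.trans (Nat.le_succ l)

lemma sq_eD_sub_eD_le (l : ℕ) (j : ℕ × ℕ) (x y : ℤ × ℤ) :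
    (eD l j x - eD l j y) ^ 2 ≤
      8 * kNormSq l j * (((x.1 - y.1 : ℤ) : ℝ) ^ 2 + ((x.2 - y.2 : ℤ) : ℝ) ^ 2) := by
  simp only [eD, kNormSq]
  generalize (kvec l j).1 = a, (kvec l j).2 = b
  have h := sq_two_mul_sin_mul_sin_sub_le (a * x.1) (b * x.2) (a * y.1) (b * y.2)
  push_cast
  nlinarith [mul_nonneg (sq_nonneg a) (sq_nonneg ((x.2 : ℝ) - y.2)),
    mul_nonneg (sq_nonneg b) (sq_nonneg ((x.1 : ℝ) - y.1))]

lemma four_div_pi_sq_mul_kNormSq_le_zeta {l : ℕ} {j : ℕ × ℕ} (h₁ : j.1 ≤ l) (h₂ : j.2 ≤ l) :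
    4 / π ^ 2 * kNormSq l j ≤ zeta l j := by
  have ha := sq_div_pi_le_sin_half_sq (pi_mul_div_succ_nonneg j.1 l) (pi_mul_div_succ_le_pi h₁)
  have hb := sq_div_pi_le_sin_half_sq (pi_mul_div_succ_nonneg j.2 l) (pi_mul_div_succ_le_pi h₂)
  have hsplit : 4 / π ^ 2 * kNormSq l j =
      4 * (((kvec l j).1 / π) ^ 2 + ((kvec l j).2 / π) ^ 2) := by
    simp only [kNormSq]; field_simp
  rw [hsplit, zeta]
  exact mul_le_mul_of_nonneg_left (add_le_add ha hb) zero_le_four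

lemma natCast_le_succ_mul_of_sq_le {n l : ℕ} {t : ℝ} (ht : 0 ≤ t)
    (h : (π * n / (l + 1)) ^ 2 ≤ (π * t) ^ 2) : (n : ℝ) ≤ (l + 1) * t := by
  rw [pow_le_pow_iff_left₀ (pi_mul_div_succ_nonneg n l) (by positivity) two_ne_zero,
    div_le_iff₀ (by positivity), mul_assoc] at h
  nlinarith [(mul_le_mul_iff_of_pos_left pi_pos).1 h]

section annulus

variable {l s : ℕ} {j : ℕ × ℕ}

lemma kNormSq_le_of_mem_annulus (hj : j ∈ annulus l s) :
    kNormSq l j ≤ (π * (2 : ℝ) ^ (-(s : ℤ))) ^ 2 := by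
  have hle := (mem_filter.1 hj).2.2
  rwa [← kNormSq, sqrt_le_left (by positivity)] at hle

lemma le_kNormSq_of_mem_annulus (hj : j ∈ annulus l s) :
    (π * (2 : ℝ) ^ (-(s : ℤ)) / 2) ^ 2 ≤ kNormSq l j := by
  have hle := (mem_filter.1 hj).2.1
  rw [← kNormSq, le_sqrt' (by positivity), neg_add, zpow_add₀ two_ne_zero] at hle
  simpa [div_eq_mul_inv, mul_comm, mul_left_comm, mul_assoc] using hle

lemma mem_Icc_of_mem_annulus (hj : j ∈ annulus l s) :
    j ∈ Icc 1 ⌊(l + 1) * (2 : ℝ) ^ (-(s : ℤ))⌋₊ ×ˢ Icc 1 ⌊(l + 1) * (2 : ℝ) ^ (-(s : ℤ))⌋₊ := by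
  have hnorm := kNormSq_le_of_mem_annulus hj
  obtain ⟨h₁, h₂⟩ := mem_product.1 (mem_filter.1 hj).1
  have ht : (0 : ℝ) ≤ 2 ^ (-(s : ℤ)) := by positivity
  refine mem_product.2 ⟨mem_Icc.2 ⟨(mem_Icc.1 h₁).1, Nat.le_floor ?_⟩,
    mem_Icc.2 ⟨(mem_Icc.1 h₂).1, Nat.le_floor ?_⟩⟩
  · refine natCast_le_succ_mul_of_sq_le ht (le_trans ?_ hnorm)
    exact le_add_of_nonneg_right (sq_nonneg _)
  · refine natCast_le_succ_mul_of_sq_le ht (le_trans ?_ hnorm)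
    exact le_add_of_nonneg_left (sq_nonneg _)

lemma card_annulus_le : ((annulus l s).card : ℝ) ≤ ((l + 1) * (2 : ℝ) ^ (-(s : ℤ))) ^ 2 := by
  have hcard := card_le_card (fun _ => mem_Icc_of_mem_annulus (l := l) (s := s))
  rw [card_product, Nat.card_Icc, Nat.add_sub_cancel] at hcard
  calc ((annulus l s).card : ℝ) ≤ (⌊(l + 1) * (2 : ℝ) ^ (-(s : ℤ))⌋₊ : ℝ) ^ 2 := by
        rw [sq]; exact_mod_cast hcard
    _ ≤ ((l + 1) * (2 : ℝ) ^ (-(s : ℤ))) ^ 2 := by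
        gcongr; exact Nat.floor_le (by positivity)

lemma sq_two_zpow_neg_le_zeta (hj : j ∈ annulus l s) :
    ((2 : ℝ) ^ (-(s : ℤ))) ^ 2 ≤ zeta l j := by
  obtain ⟨h₁, h₂⟩ := mem_product.1 (mem_filter.1 hj).1
  calc ((2 : ℝ) ^ (-(s : ℤ))) ^ 2 = 4 / π ^ 2 * (π * (2 : ℝ) ^ (-(s : ℤ)) / 2) ^ 2 := by
        field_simp; ring
    _ ≤ 4 / π ^ 2 * kNormSq l j := by gcongr; exact le_kNormSq_of_mem_annulus hj
    _ ≤ zeta l j := four_div_pi_sq_mul_kNormSq_le_zeta (mem_Icc.1 h₁).2 (mem_Icc.1 h₂).2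

lemma increment_div_sq_le_of_mem_annulus (hj : j ∈ annulus l s)
    {lam : ℝ} (hlam : 0 ≤ lam) (x y : ℤ × ℤ) :
    (eD l j x - eD l j y) ^ 2 / (zeta l j + lam) ^ 2 ≤
      8 * π ^ 2 * ((2 : ℝ) ^ (-(s : ℤ))) ^ 2 *
          (((x.1 - y.1 : ℤ) : ℝ) ^ 2 + ((x.2 - y.2 : ℤ) : ℝ) ^ 2) /
        (lam + ((2 : ℝ) ^ (-(s : ℤ))) ^ 2) ^ 2 := by
  have hnum : (eD l j x - eD l j y) ^ 2 ≤ 8 * π ^ 2 * ((2 : ℝ) ^ (-(s : ℤ))) ^ 2 *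
      (((x.1 - y.1 : ℤ) : ℝ) ^ 2 + ((x.2 - y.2 : ℤ) : ℝ) ^ 2) := by
    calc (eD l j x - eD l j y) ^ 2
        ≤ 8 * kNormSq l j * (((x.1 - y.1 : ℤ) : ℝ) ^ 2 + ((x.2 - y.2 : ℤ) : ℝ) ^ 2) :=
          sq_eD_sub_eD_le l j x y
      _ ≤ 8 * (π * (2 : ℝ) ^ (-(s : ℤ))) ^ 2 *
            (((x.1 - y.1 : ℤ) : ℝ) ^ 2 + ((x.2 - y.2 : ℤ) : ℝ) ^ 2) := by
          gcongr; exact kNormSq_le_of_mem_annulus hj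
      _ = _ := by ring
  have hden : (lam + ((2 : ℝ) ^ (-(s : ℤ))) ^ 2) ^ 2 ≤ (zeta l j + lam) ^ 2 :=
    pow_le_pow_left₀ (by positivity) (by linarith [sq_two_zpow_neg_le_zeta hj]) 2
  exact div_le_div₀ (by positivity) hnum (by positivity) hden

end annulus

/-- Variance bound for increments of the annulus component of the massive
Gaussian field:
`(1/l²) Σ_{k∈A_s} (e^D_k(x)−e^D_k(y))²/(ζ_k+λ)² ≤ C 2^{−4s}/(λ+2^{−2s})² ‖x−y‖₂²`. -/
theorem stmt6 :
    ∃ C : ℝ, 0 < C ∧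
      ∀ l : ℕ, 1 ≤ l → ∀ lam : ℝ, 0 < lam →
        ∀ s : ℕ, s ≤ ⌈Real.logb 2 ((l : ℝ) + 1)⌉₊ →
          ∀ x ∈ Finset.Icc (1 : ℤ) (l : ℤ) ×ˢ Finset.Icc (1 : ℤ) (l : ℤ),
            ∀ y ∈ Finset.Icc (1 : ℤ) (l : ℤ) ×ˢ Finset.Icc (1 : ℤ) (l : ℤ),
              (1 / (l : ℝ) ^ 2) *
                  ∑ j ∈ annulus l s, (eD l j x - eD l j y) ^ 2 / (zeta l j + lam) ^ 2
                ≤ C * (2 : ℝ) ^ (-(4 * (s : ℤ))) / (lam + (2 : ℝ) ^ (-(2 * (s : ℤ)))) ^ 2 *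
                  (((x.1 - y.1 : ℤ) : ℝ) ^ 2 + ((x.2 - y.2 : ℤ) : ℝ) ^ 2) := by
  refine ⟨32 * π ^ 2, by positivity, fun l hl lam hlam s _ x _ y _ => ?_⟩
  have h4 : (2 : ℝ) ^ (-(4 * (s : ℤ))) = ((2 : ℝ) ^ (-(s : ℤ))) ^ 4 := by
    rw [← zpow_natCast, ← zpow_mul]; ring_nf
  have h2 : (2 : ℝ) ^ (-(2 * (s : ℤ))) = ((2 : ℝ) ^ (-(s : ℤ))) ^ 2 := by
    rw [← zpow_natCast, ← zpow_mul]; ring_nf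
  rw [h4, h2]
  set t : ℝ := (2 : ℝ) ^ (-(s : ℤ))
  set D : ℝ := ((x.1 - y.1 : ℤ) : ℝ) ^ 2 + ((x.2 - y.2 : ℤ) : ℝ) ^ 2
  have hl : (1 : ℝ) ≤ l := by exact_mod_cast hl
  have hcard : ((annulus l s).card : ℝ) ≤ (2 * l * t) ^ 2 :=
    card_annulus_le.trans (by gcongr; linarith)
  have hsum := sum_le_card_nsmul (annulus l s) _ _
    fun j hj => increment_div_sq_le_of_mem_annulus hj hlam.le x y
  rw [nsmul_eq_mul] at hsum
  calc (1 / (l : ℝ) ^ 2) * ∑ j ∈ annulus l s, (eD l j x - eD l j y) ^ 2 / (zeta l j + lam) ^ 2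
      ≤ (1 / (l : ℝ) ^ 2) * ((2 * l * t) ^ 2 * (8 * π ^ 2 * t ^ 2 * D / (lam + t ^ 2) ^ 2)) := by
        gcongr; exact hsum.trans (by gcongr)
    _ = 32 * π ^ 2 * t ^ 4 / (lam + t ^ 2) ^ 2 * D := by
        field_simp; ring
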